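/- arXiv:1911.05302 — 2 statements merged into one kernel-verified Lean document; each statement's English description precedes it below -/
import Mathlib

section
/- The number of connected components of a k-uniform hypergraph G equals its geometry connectivity β(G), i.e., the maximum number of linearly independent nonnegative eigenvectors of the Laplacian tensor L_G corresponding to the eigenvalue 0. -/
open Finset

/-- A `k`-uniform hypergraph on vertex set `Fin n`. -/
structure UniformHypergraph (n k : ℕ) where
  edges : Finset (Finset (Fin n))
  card_eq : ∀ e ∈ edges, e.card = k

namespace UniformHypergraph

variable {n k : ℕ}

/-- Degree of a vertex: the number of edges containing it. -/
def degree (G : UniformHypergraph n k) (i : Fin n) : ℕ :=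
  (G.edges.filter (fun e => i ∈ e)).card

/-- Maximum degree ∇ of the hypergraph. -/
def maxDegree (G : UniformHypergraph n k) : ℕ :=
  Finset.univ.sup G.degree

/-- The adjacency tensor: entry `1/(k-1)!` if the index tuple enumerates an edge. -/
noncomputable def adjTensor (G : UniformHypergraph n k) : (Fin k → Fin n) → ℝ :=
  fun f => if Finset.image f Finset.univ ∈ G.edges then 1 / (Nat.factorial (k - 1)) else 0

/-- The identity tensor `I`: 1 on the diagonal, 0 elsewhere. -/
noncomputable def idTensor (n k : ℕ) [NeZero k] : (Fin k → Fin n) → ℝ :=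
  fun f => if ∀ j, f j = f 0 then 1 else 0

/-- The degree (diagonal) tensor `D`. -/
noncomputable def degTensor (G : UniformHypergraph n k) [NeZero k] : (Fin k → Fin n) → ℝ :=
  fun f => if ∀ j, f j = f 0 then (G.degree (f 0) : ℝ) else 0

/-- The Laplacian tensor `L = D - A`. -/
noncomputable def lapTensor (G : UniformHypergraph n k) [NeZero k] : (Fin k → Fin n) → ℝ :=
  fun f => G.degTensor f - G.adjTensor f

end UniformHypergraph

/-- `(T x^{k-1})_i = ∑_{i₂,…,i_k} t_{i i₂ … i_k} x_{i₂} ⋯ x_{i_k}`. -/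
noncomputable def tapply {ι : Type*} [Fintype ι] [DecidableEq ι] {k : ℕ} [NeZero k]
    (T : (Fin k → ι) → ℝ) (x : ι → ℝ) : ι → ℝ :=
  fun i => ∑ g : Fin k → ι,
    if g 0 = i then T g * ∏ j ∈ Finset.univ.erase (0 : Fin k), x (g j) else 0

/-- `(λ, x)` is an eigenpair of `T` : `T x^{k-1} = λ x^{[k-1]}`, `x ≠ 0`. -/
def IsEigenpair {n k : ℕ} [NeZero k] (T : (Fin k → Fin n) → ℝ) (lam : ℝ)
    (x : Fin n → ℝ) : Prop :=
  x ≠ 0 ∧ tapply T x = fun i => lam * (x i) ^ (k - 1)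

/-- Complex version of `T x^{k-1}` for a real tensor `T`. -/
noncomputable def capply {n k : ℕ} [NeZero k] (T : (Fin k → Fin n) → ℝ) (x : Fin n → ℂ) : Fin n → ℂ :=
  fun i => ∑ g : Fin k → Fin n,
    if g 0 = i then (T g : ℂ) * ∏ j ∈ Finset.univ.erase (0 : Fin k), x (g j) else 0

/-- `lam` is a (complex) eigenvalue of the real tensor `T`. -/
def IsCEigenvalue {n k : ℕ} [NeZero k] (T : (Fin k → Fin n) → ℝ) (lam : ℂ) : Prop :=
  ∃ x : Fin n → ℂ, x ≠ 0 ∧ capply T x = fun i => lam * (x i) ^ (k - 1)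

/-- The spectral radius: the maximum modulus of eigenvalues of `T`. -/
noncomputable def specRad {n k : ℕ} [NeZero k] (T : (Fin k → Fin n) → ℝ) : ℝ :=
  sSup {r : ℝ | ∃ lam : ℂ, IsCEigenvalue T lam ∧ ‖lam‖ = r}

/-- Arc `(i,j)` of the directed graph associated with a nonnegative tensor. -/
def tensorArc {n k : ℕ} [NeZero k] (T : (Fin k → Fin n) → ℝ) (i j : Fin n) : Prop :=
  ∃ g : Fin k → Fin n, g 0 = i ∧ 0 < T g ∧ ∃ l : Fin k, l ≠ 0 ∧ g l = j

/-- A tensor is weakly irreducible if its associated digraph is strongly connected. -/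
def WeaklyIrreducible {n k : ℕ} [NeZero k] (T : (Fin k → Fin n) → ℝ) : Prop :=
  ∀ i j : Fin n, Relation.ReflTransGen (tensorArc T) i j

namespace UniformHypergraph

variable {n k : ℕ}

/-- Two vertices are adjacent if some edge contains both. -/
def adjRel (G : UniformHypergraph n k) (u v : Fin n) : Prop :=
  ∃ e ∈ G.edges, u ∈ e ∧ v ∈ e

/-- A hypergraph is connected if any two vertices are joined by a path. -/
def Connected (G : UniformHypergraph n k) : Prop :=
  ∀ u v : Fin n, Relation.ReflTransGen (G.adjRel) u v

/-- `V : Fin r → Finset (Fin n)` lists the connected components of `G`: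
the `V j` are nonempty, partition the vertex set, and each `V j` is exactly a
connectivity class. -/
def IsComponents (G : UniformHypergraph n k) {r : ℕ} (V : Fin r → Finset (Fin n)) : Prop :=
  (∀ i : Fin n, ∃! j : Fin r, i ∈ V j) ∧
  (∀ j : Fin r, (V j).Nonempty) ∧
  (∀ j : Fin r, ∀ u ∈ V j, ∀ v : Fin n,
    (v ∈ V j ↔ Relation.ReflTransGen (G.adjRel) u v))

end UniformHypergraph

/-- Principal subtensor of `T` indexed by the subset `S`. -/
noncomputable def subtensor {n k : ℕ} (T : (Fin k → Fin n) → ℝ) (S : Finset (Fin n)) :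
    (Fin k → {i // i ∈ S}) → ℝ :=
  fun f => T (fun j => (f j : Fin n))

/-- Restriction of a vector to the coordinates in `S`. -/
noncomputable def restrictVec {n : ℕ} (x : Fin n → ℝ) (S : Finset (Fin n)) : {i // i ∈ S} → ℝ :=
  fun i => x i

/-- Indicator vector of a subset. -/
noncomputable def indicator {n : ℕ} (S : Finset (Fin n)) : Fin n → ℝ :=
  fun j => if j ∈ S then 1 else 0

/-- `r` is the maximum number of linearly independent elements of `S`. -/
def maxLinIndep {V : Type*} [AddCommGroup V] [Module ℝ V] (S : Set V) (r : ℕ) : Prop :=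
  (∃ v : Fin r → V, (∀ i, v i ∈ S) ∧ LinearIndependent ℝ v) ∧
  (∀ (m : ℕ) (w : Fin m → V), (∀ i, w i ∈ S) → LinearIndependent ℝ w → m ≤ r)



section AuxProof

open UniformHypergraph

variable {n k : ℕ}

lemma aux_count [NeZero k] (i : Fin n) (e : Finset (Fin n)) (he : e.card = k) (hie : i ∈ e) :
    (Finset.univ.filter
      (fun g : Fin k → Fin n => g 0 = i ∧ Finset.image g Finset.univ = e)).card
      = Nat.factorial (k - 1) := by
  classical
  have hinj : ∀ g : Fin k → Fin n, Finset.image g Finset.univ = e → Function.Injective g := by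
    intro g hg
    have h1 : (Finset.image g Finset.univ).card = (Finset.univ : Finset (Fin k)).card := by
      rw [hg, he, Finset.card_univ, Fintype.card_fin]
    have h2 := Finset.card_image_iff.mp h1
    rw [Finset.coe_univ] at h2
    exact fun a b hab => h2 (Set.mem_univ a) (Set.mem_univ b) hab
  have key : (Finset.univ.filter
      (fun g : Fin k → Fin n => g 0 = i ∧ Finset.image g Finset.univ = e)).card
      = (Finset.univ : Finset ({j : Fin k // j ≠ 0} ↪ {v : Fin n // v ∈ e.erase i})).card := by
    refine Finset.card_bij'
      (fun g hg => ⟨fun j => ⟨g j.1, ?memo⟩, ?injo⟩)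
      (fun f _ => fun j : Fin k => if h : j = 0 then i else (f ⟨j, h⟩).1)
      (fun g hg => Finset.mem_univ _) ?bmem ?linv ?rinv
    case memo =>
      obtain ⟨h0, hgim⟩ := (Finset.mem_filter.mp hg).2
      refine Finset.mem_erase.mpr ⟨?_, ?_⟩
      · intro hcon
        exact j.2 (hinj g hgim (hcon.trans h0.symm))
      · rw [← hgim]; exact Finset.mem_image_of_mem g (Finset.mem_univ _)
    case injo =>
      obtain ⟨h0, hgim⟩ := (Finset.mem_filter.mp hg).2
      intro a b hab
      exact Subtype.ext (hinj g hgim (congrArg Subtype.val hab))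
    case bmem =>
      intro f _
      rw [Finset.mem_filter]
      refine ⟨Finset.mem_univ _, dif_pos rfl, ?_⟩
      have hBinj : Function.Injective (fun j : Fin k => if h : j = 0 then i else (f ⟨j, h⟩).1) := by
        intro a b hab
        by_cases ha : a = 0 <;> by_cases hb : b = 0
        · rw [ha, hb]
        · exfalso
          simp only [dif_pos ha, dif_neg hb] at hab
          exact (Finset.ne_of_mem_erase (f ⟨b, hb⟩).2) hab.symm
        · exfalso
          simp only [dif_neg ha, dif_pos hb] at hab
          exact (Finset.ne_of_mem_erase (f ⟨a, ha⟩).2) hab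
        · simp only [dif_neg ha, dif_neg hb] at hab
          have := f.injective (Subtype.ext hab)
          exact congrArg Subtype.val this
      apply Finset.eq_of_subset_of_card_le
      · intro v hv
        obtain ⟨a, _, rfl⟩ := Finset.mem_image.mp hv
        by_cases ha : a = 0
        · simp only [dif_pos ha]; exact hie
        · simp only [dif_neg ha]
          exact Finset.mem_of_mem_erase (f ⟨a, ha⟩).2
      · rw [he, Finset.card_image_of_injective _ hBinj, Finset.card_univ, Fintype.card_fin]
    case linv =>
      intro g hg
      obtain ⟨h0, _⟩ := (Finset.mem_filter.mp hg).2
      funext a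
      by_cases ha : a = 0
      · simp [ha, h0]
      · simp [ha]
    case rinv =>
      intro f _
      apply Function.Embedding.ext
      intro a
      apply Subtype.ext
      simp only [Function.Embedding.coeFn_mk, dif_neg a.2]
  rw [key, Finset.card_univ, Fintype.card_embedding_eq]
  have h1 : Fintype.card {j : Fin k // j ≠ 0} = k - 1 := by
    simp [Fintype.card_subtype_compl]
  have h2 : Fintype.card {v : Fin n // v ∈ e.erase i} = k - 1 := by
    rw [Fintype.card_coe, Finset.card_erase_of_mem hie, he]
  rw [h1, h2, Nat.descFactorial_self]

lemma tapply_lapTensor [NeZero k] (G : UniformHypergraph n k) (x : Fin n → ℝ) (i : Fin n) :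
    tapply G.lapTensor x i
      = (G.degree i : ℝ) * x i ^ (k - 1)
        - ∑ e ∈ G.edges.filter (fun e => i ∈ e), ∏ v ∈ e.erase i, x v := by
  classical
  have hk1 : (Finset.univ.erase (0 : Fin k)).card = k - 1 := by
    rw [Finset.card_erase_of_mem (Finset.mem_univ _), Finset.card_univ, Fintype.card_fin]
  have hfac : ((Nat.factorial (k - 1) : ℝ)) ≠ 0 := by
    exact_mod_cast Nat.factorial_ne_zero (k - 1)
  unfold tapply
  have hsplit : ∀ g : Fin k → Fin n,
      (if g 0 = i then G.lapTensor g * ∏ j ∈ Finset.univ.erase (0 : Fin k), x (g j) else 0)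
      = (if g 0 = i then G.degTensor g * ∏ j ∈ Finset.univ.erase (0 : Fin k), x (g j) else 0)
        - (if g 0 = i then G.adjTensor g * ∏ j ∈ Finset.univ.erase (0 : Fin k), x (g j) else 0) := by
    intro g
    by_cases h : g 0 = i <;> simp [h, UniformHypergraph.lapTensor, sub_mul]
  rw [Finset.sum_congr rfl (fun g _ => hsplit g), Finset.sum_sub_distrib]
  congr 1
  · rw [Finset.sum_eq_single (fun _ : Fin k => i)]
    · rw [if_pos rfl]
      show G.degTensor (fun _ => i) * (∏ _j ∈ Finset.univ.erase (0 : Fin k), x i) = _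
      rw [Finset.prod_const, hk1]
      congr 1
      unfold UniformHypergraph.degTensor
      rw [if_pos (fun j => rfl)]
    · intro g _ hne
      by_cases h0 : g 0 = i
      · rw [if_pos h0]
        have hd : G.degTensor g = 0 := by
          unfold UniformHypergraph.degTensor
          rw [if_neg]
          intro hall
          exact hne (funext fun j => (hall j).trans h0)
        rw [hd, zero_mul]
      · exact if_neg h0
    · intro h; exact absurd (Finset.mem_univ _) h
  · have hterm : ∀ g : Fin k → Fin n,
        (if g 0 = i then G.adjTensor g * ∏ j ∈ Finset.univ.erase (0 : Fin k), x (g j) else 0)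
        = if (g 0 = i ∧ Finset.image g Finset.univ ∈ G.edges) then
            (1 / (Nat.factorial (k - 1) : ℝ)) * ∏ j ∈ Finset.univ.erase (0 : Fin k), x (g j)
          else 0 := by
      intro g
      by_cases h0 : g 0 = i <;> by_cases h1 : Finset.image g Finset.univ ∈ G.edges <;>
        simp [UniformHypergraph.adjTensor, h0, h1]
    rw [Finset.sum_congr rfl fun g _ => hterm g, ← Finset.sum_filter]
    have hmap : ∀ g ∈ Finset.univ.filter
        (fun g : Fin k → Fin n => g 0 = i ∧ Finset.image g Finset.univ ∈ G.edges),
        Finset.image g Finset.univ ∈ G.edges.filter (fun e => i ∈ e) := by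
      intro g hg
      obtain ⟨h0, h1⟩ := (Finset.mem_filter.mp hg).2
      exact Finset.mem_filter.mpr ⟨h1, h0 ▸ Finset.mem_image_of_mem g (Finset.mem_univ _)⟩
    rw [← Finset.sum_fiberwise_of_maps_to hmap]
    apply Finset.sum_congr rfl
    intro e hef
    obtain ⟨hee, hie⟩ := Finset.mem_filter.mp hef
    have he : e.card = k := G.card_eq e hee
    have hinj : ∀ g : Fin k → Fin n, Finset.image g Finset.univ = e → Function.Injective g := by
      intro g hg
      have h1 : (Finset.image g Finset.univ).card = (Finset.univ : Finset (Fin k)).card := by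
        rw [hg, he, Finset.card_univ, Fintype.card_fin]
      have h2 := Finset.card_image_iff.mp h1
      rw [Finset.coe_univ] at h2
      exact fun a b hab => h2 (Set.mem_univ a) (Set.mem_univ b) hab
    have hFe : (Finset.univ.filter
        (fun g : Fin k → Fin n => g 0 = i ∧ Finset.image g Finset.univ ∈ G.edges)).filter
          (fun g => Finset.image g Finset.univ = e)
        = Finset.univ.filter (fun g : Fin k → Fin n => g 0 = i ∧ Finset.image g Finset.univ = e) := by
      rw [Finset.filter_filter]
      apply Finset.filter_congr
      intro g _
      constructor
      · rintro ⟨⟨h0, _⟩, h2⟩; exact ⟨h0, h2⟩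
      · rintro ⟨h0, h2⟩; exact ⟨⟨h0, h2 ▸ hee⟩, h2⟩
    have hP : ∀ g ∈ Finset.univ.filter
        (fun g : Fin k → Fin n => g 0 = i ∧ Finset.image g Finset.univ = e),
        (∏ j ∈ Finset.univ.erase (0 : Fin k), x (g j)) = ∏ v ∈ e.erase i, x v := by
      intro g hg
      obtain ⟨h0, him⟩ := (Finset.mem_filter.mp hg).2
      have hginj := hinj g him
      have himg : (Finset.univ.erase (0 : Fin k)).image g = e.erase i := by
        rw [Finset.image_erase hginj, him, h0]
      rw [← himg, Finset.prod_image (fun a _ b _ hab => hginj hab)]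
    rw [hFe, Finset.sum_congr rfl (fun g hg => by rw [hP g hg]), Finset.sum_const,
        aux_count i e he hie, nsmul_eq_mul]
    rw [← mul_assoc, mul_one_div, div_self hfac, one_mul]

lemma edge_in_component (G : UniformHypergraph n k) {r : ℕ} {V : Fin r → Finset (Fin n)}
    (hV : G.IsComponents V) {j : Fin r} {u : Fin n} (hu : u ∈ V j)
    {e : Finset (Fin n)} (he : e ∈ G.edges) (hue : u ∈ e) {v : Fin n} (hv : v ∈ e) :
    v ∈ V j := by
  rw [hV.2.2 j u hu v]
  exact Relation.ReflTransGen.single ⟨e, he, hue, hv⟩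

lemma tapply_indicator [NeZero k] (G : UniformHypergraph n k) (hk : 2 ≤ k)
    {r : ℕ} {V : Fin r → Finset (Fin n)} (hV : G.IsComponents V) (j : Fin r) :
    tapply G.lapTensor (indicator (V j)) = 0 := by
  classical
  funext i
  rw [Pi.zero_apply, tapply_lapTensor]
  by_cases hi : i ∈ V j
  · have h1 : indicator (V j) i = 1 := if_pos hi
    have hedge : ∀ e ∈ G.edges.filter (fun e => i ∈ e),
        (∏ v ∈ e.erase i, indicator (V j) v) = 1 := by
      intro e hef
      obtain ⟨hee, hie⟩ := Finset.mem_filter.mp hef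
      apply Finset.prod_eq_one
      intro v hv
      exact if_pos (edge_in_component G hV hi hee hie (Finset.mem_of_mem_erase hv))
    rw [Finset.sum_congr rfl hedge, Finset.sum_const, h1, one_pow, mul_one, nsmul_eq_mul, mul_one]
    rw [UniformHypergraph.degree, sub_self]
  · have h1 : indicator (V j) i = 0 := if_neg hi
    have hedge : ∀ e ∈ G.edges.filter (fun e => i ∈ e),
        (∏ v ∈ e.erase i, indicator (V j) v) = 0 := by
      intro e hef
      obtain ⟨hee, hie⟩ := Finset.mem_filter.mp hef
      have hne : (e.erase i).Nonempty := by
        rw [← Finset.card_pos, Finset.card_erase_of_mem hie, G.card_eq e hee]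
        omega
      obtain ⟨v, hv⟩ := hne
      apply Finset.prod_eq_zero hv
      rw [indicator, if_neg]
      intro hvj
      exact hi (edge_in_component G hV hvj hee (Finset.mem_of_mem_erase hv) hie)
    rw [Finset.sum_congr rfl hedge, Finset.sum_const, h1, smul_zero, zero_pow (by omega : k - 1 ≠ 0),
      mul_zero, sub_zero]

lemma constant_on_component [NeZero k] (G : UniformHypergraph n k) (hk : 2 ≤ k)
    {x : Fin n → ℝ} (hx0 : ∀ i, 0 ≤ x i) (hxe : tapply G.lapTensor x = 0)
    {r : ℕ} {V : Fin r → Finset (Fin n)} (hV : G.IsComponents V) (j : Fin r)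
    {u v : Fin n} (hu : u ∈ V j) (hv : v ∈ V j) : x u = x v := by
  classical
  obtain ⟨b, hb, hbmax⟩ := Finset.exists_max_image (V j) x (hV.2.1 j)
  suffices hconst : ∀ w ∈ V j, x w = x b by
    rw [hconst u hu, hconst v hv]
  rcases lt_or_eq_of_le (hx0 b) with hmpos | hmz
  · -- positive maximum
    have step : ∀ w, w ∈ V j → x w = x b → ∀ w', G.adjRel w w' → x w' = x b := by
      intro w hw hxw w' ⟨e, hee, hwe, hw'e⟩
      have hprodle : ∀ e' ∈ G.edges.filter (fun e' => w ∈ e'),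
          (∏ z ∈ e'.erase w, x z) ≤ x b ^ (k - 1) := by
        intro e' he'f
        obtain ⟨he'e, hwe'⟩ := Finset.mem_filter.mp he'f
        have hcard : (e'.erase w).card = k - 1 := by
          rw [Finset.card_erase_of_mem hwe', G.card_eq e' he'e]
        calc (∏ z ∈ e'.erase w, x z) ≤ ∏ _z ∈ e'.erase w, x b := by
              apply Finset.prod_le_prod (fun z _ => hx0 z)
              intro z hz
              exact hbmax z (edge_in_component G hV hw he'e hwe' (Finset.mem_of_mem_erase hz))
          _ = x b ^ (k - 1) := by rw [Finset.prod_const, hcard]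
      have heq : ∀ e' ∈ G.edges.filter (fun e' => w ∈ e'),
          (∏ z ∈ e'.erase w, x z) = x b ^ (k - 1) := by
        rw [← Finset.sum_eq_sum_iff_of_le hprodle]
        have hw0 := congrFun hxe w
        rw [Pi.zero_apply, tapply_lapTensor] at hw0
        rw [Finset.sum_const, ← UniformHypergraph.degree, nsmul_eq_mul]
        rw [hxw] at hw0
        linarith
      by_cases hww' : w' = w
      · rw [hww', hxw]
      · have hw'er : w' ∈ e.erase w := Finset.mem_erase.mpr ⟨hww', hw'e⟩
        have hpe := heq e (Finset.mem_filter.mpr ⟨hee, hwe⟩)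
        rw [← Finset.mul_prod_erase _ _ hw'er] at hpe
        have hle : x w' ≤ x b :=
          hbmax w' (edge_in_component G hV hw hee hwe hw'e)
        by_contra hne
        have hlt : x w' < x b := lt_of_le_of_ne hle hne
        have hcard2 : ((e.erase w).erase w').card = k - 2 := by
          rw [Finset.card_erase_of_mem hw'er, Finset.card_erase_of_mem hwe, G.card_eq e hee]
          omega
        have hrest : (∏ z ∈ (e.erase w).erase w', x z) ≤ x b ^ (k - 2) := by
          calc (∏ z ∈ (e.erase w).erase w', x z) ≤ ∏ _z ∈ (e.erase w).erase w', x b := by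
                apply Finset.prod_le_prod (fun z _ => hx0 z)
                intro z hz
                exact hbmax z (edge_in_component G hV hw hee hwe
                  (Finset.mem_of_mem_erase (Finset.mem_of_mem_erase hz)))
            _ = x b ^ (k - 2) := by rw [Finset.prod_const, hcard2]
        have hpow : (0:ℝ) < x b ^ (k - 2) := pow_pos hmpos _
        have h1 : x w' * (∏ z ∈ (e.erase w).erase w', x z) ≤ x w' * (x b ^ (k - 2)) :=
          mul_le_mul_of_nonneg_left hrest (hx0 w')
        have h2 : x w' * (x b ^ (k - 2)) < x b * x b ^ (k - 2) :=
          mul_lt_mul_of_pos_right hlt hpow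
        have h3 : x b * x b ^ (k - 2) = x b ^ (k - 1) := by
          rw [← pow_succ']
          congr 1
          omega
        linarith [hpe, h1, h2]
    have hreach : ∀ w, Relation.ReflTransGen G.adjRel b w → x w = x b := by
      intro w hwr
      induction hwr with
      | refl => rfl
      | tail hbc hcw ih =>
        exact step _ ((hV.2.2 j b hb _).mpr hbc) ih _ hcw
    intro w hw
    exact hreach w ((hV.2.2 j b hb w).mp hw)
  · intro w hw
    have h1 := hbmax w hw
    have h2 := hx0 w
    linarith

end AuxProof

/-- the number of connected components of `G` equals the geometry
connectivity `β(G)`. -/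
theorem components_eq_geometry_connectivity {n k r : ℕ} [NeZero k] (hk : 2 ≤ k)
    (G : UniformHypergraph n k) (V : Fin r → Finset (Fin n)) (hV : G.IsComponents V) :
    maxLinIndep {x : Fin n → ℝ | x ≠ 0 ∧ (∀ i, 0 ≤ x i) ∧ tapply G.lapTensor x = 0} r := by
  classical
  obtain ⟨huniq, hne, hcomp⟩ := id hV
  constructor
  · refine ⟨fun j => indicator (V j), fun j => ⟨?_, ?_, tapply_indicator G hk hV j⟩, ?_⟩
    · obtain ⟨p, hp⟩ := hne j
      intro h
      have := congrFun h p
      simp only [indicator, if_pos hp, Pi.zero_apply] at this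
      exact one_ne_zero this
    · intro i
      simp only [indicator]
      split_ifs <;> norm_num
    · rw [Fintype.linearIndependent_iff]
      intro a ha j
      obtain ⟨p, hp⟩ := hne j
      have h1 := congrFun ha p
      rw [Finset.sum_apply, Pi.zero_apply] at h1
      rw [Finset.sum_eq_single j] at h1
      · rw [Pi.smul_apply, smul_eq_mul] at h1
        simp only [indicator, if_pos hp, mul_one] at h1
        exact h1
      · intro j' _ hj'
        have hnp : p ∉ V j' := fun hmem => hj' ((huniq p).unique hmem hp)
        rw [Pi.smul_apply, smul_eq_mul]
        simp only [indicator, if_neg hnp, mul_zero]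
      · intro h; exact absurd (Finset.mem_univ _) h
  · intro m w hw hli
    set pt : Fin r → Fin n := fun j => (hne j).choose with hpt
    have hptmem : ∀ j, pt j ∈ V j := fun j => (hne j).choose_spec
    let Φ : (Fin r → ℝ) →ₗ[ℝ] (Fin n → ℝ) :=
      { toFun := fun c => ∑ j, c j • indicator (V j)
        map_add' := by
          intro a b
          simp only [Pi.add_apply, add_smul, Finset.sum_add_distrib]
        map_smul' := by
          intro s a
          simp only [Pi.smul_apply, smul_eq_mul, mul_smul, RingHom.id_apply, Finset.smul_sum] }
    have hrepr : ∀ i, Φ (fun j => w i (pt j)) = w i := by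
      intro i
      obtain ⟨hwne, hw0, hweq⟩ := hw i
      funext u
      obtain ⟨j, hj, _⟩ := huniq u
      have hΦ : Φ (fun j => w i (pt j)) u = ∑ j', w i (pt j') * indicator (V j') u := by
        simp only [Φ, LinearMap.coe_mk, AddHom.coe_mk, Finset.sum_apply, Pi.smul_apply,
          smul_eq_mul]
      rw [hΦ, Finset.sum_eq_single j]
      · simp only [indicator, if_pos hj, mul_one]
        exact constant_on_component G hk hw0 hweq hV j (hptmem j) hj
      · intro j' _ hj'
        have hnu : u ∉ V j' := fun hmem => hj' ((huniq u).unique hmem hj)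
        simp only [indicator, if_neg hnu, mul_zero]
      · intro h; exact absurd (Finset.mem_univ _) h
    have hli' : LinearIndependent ℝ (fun i : Fin m => (fun j => w i (pt j) : Fin r → ℝ)) := by
      apply LinearIndependent.of_comp Φ
      have : (⇑Φ ∘ fun i : Fin m => (fun j => w i (pt j) : Fin r → ℝ)) = w := by
        funext i
        exact hrepr i
      rwa [this]
    have hcard := hli'.fintype_card_le_finrank
    rwa [Fintype.card_fin, Module.finrank_fin_fun] at hcard
end

section
/- The number of connected components of a k-uniform hypergraph G equals its Z-geometry connectivity β_Z(G), the maximum number of linearly independent nonnegative Z-eigenvectors of the Laplacian tensor corresponding to the Z-eigenvalue 0. -/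
open Finset

/-!
The normalised indicator vectors of the components are nonnegative zero-eigenvectors, since a
vector that is constant on every edge is annihilated by `L_G`, and they are independent because
the components are disjoint. Conversely, let `x ≥ 0` satisfy `L_G x^{k-1} = 0` and let `b` be a
vertex where `x` is maximal among its neighbours. The `b`-th equation says that
`deg(b) x_b^{k-1}` is a sum of `deg(b)` products, one per edge through `b`, each at most
`x_b^{k-1}`; so every product equals `x_b^{k-1}` and `x` takes the value `x_b` on all neighbours
of `b`. Starting from a maximum of `x` on a component, `x` is therefore constant on each
component, so every such `x` lies in the span of the `r` indicator vectors.
-/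

theorem Function.injective_of_card_image_univ {α β : Type*} [Fintype α] [DecidableEq β]
    {t : α → β} (h : #(univ.image t) = Fintype.card α) : Function.Injective t := by
  simpa using injOn_of_card_image_eq (s := univ) (f := t) h

theorem Finset.card_filter_image_univ_eq {α β : Type*} [Fintype α] [DecidableEq α] [Fintype β]
    [DecidableEq β] {s : Finset β} (hs : #s = Fintype.card α) :
    #{t : α → β | univ.image t = s} = (Fintype.card α).factorial := by
  let e : {t : α → β // univ.image t = s} ≃ (α ≃ s) :=
    { toFun := fun t => Equiv.ofBijective (fun a => ⟨t.1 a, by simp [← t.2]⟩)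
        ((Fintype.bijective_iff_injective_and_card _).2
          ⟨fun a b h => Function.injective_of_card_image_univ (by rw [t.2, hs])
            (congrArg Subtype.val h), by simp [hs]⟩)
      invFun := fun σ => ⟨fun a => σ a, by
        ext b
        simp only [mem_image, mem_univ, true_and]
        exact ⟨fun ⟨a, ha⟩ => ha ▸ (σ a).2, fun hb => ⟨σ.symm ⟨b, hb⟩, by simp⟩⟩⟩
      left_inv := fun t => rfl
      right_inv := fun σ => Equiv.ext fun a => rfl }
  rw [← Fintype.card_subtype, Fintype.card_congr e,
    Fintype.card_equiv (Fintype.equivOfCardEq (by simp [hs]))]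

theorem Finset.insert_eq_iff_eq_erase {β : Type*} [DecidableEq β] {s e : Finset β} {i : β}
    (hi : i ∈ e) (hs : #s < #e) : insert i s = e ↔ s = e.erase i := by
  refine ⟨fun h => ?_, fun h => h ▸ insert_erase hi⟩
  have his : i ∉ s := fun his => by rw [insert_eq_of_mem his] at h; exact hs.ne (h ▸ rfl)
  rw [← h, erase_insert his]

theorem Fin.image_univ_cons {β : Type*} [DecidableEq β] {k : ℕ} (i : β) (t : Fin k → β) :
    univ.image (Fin.cons i t : Fin (k + 1) → β) = insert i (univ.image t) := by
  ext v
  simp [Fin.exists_fin_succ, eq_comm]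

theorem Finset.eq_of_forall_le_of_prod_eq_pow {ι R : Type*} [CommSemiring R] [LinearOrder R]
    [IsStrictOrderedRing R] {s : Finset ι} {f : ι → R} {m : R} (h0 : ∀ v ∈ s, 0 ≤ f v)
    (hle : ∀ v ∈ s, f v ≤ m) (hprod : ∏ v ∈ s, f v = m ^ #s) {v : ι} (hv : v ∈ s) :
    f v = m := by
  classical
  by_contra hne
  have hlt : f v < m := (hle v hv).lt_of_ne hne
  have hrest : ∏ w ∈ s.erase v, f w ≤ m ^ #(s.erase v) := by
    rw [← prod_const]
    exact prod_le_prod (fun w hw => h0 w (mem_of_mem_erase hw))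
      fun w hw => hle w (mem_of_mem_erase hw)
  have : m ^ #s < m ^ #s :=
    calc m ^ #s = f v * ∏ w ∈ s.erase v, f w := by rw [mul_prod_erase s f hv, hprod]
      _ ≤ f v * m ^ #(s.erase v) := mul_le_mul_of_nonneg_left hrest (h0 v hv)
      _ < m * m ^ #(s.erase v) :=
          mul_lt_mul_of_pos_right hlt (pow_pos ((h0 v hv).trans_lt hlt) _)
      _ = m ^ #s := by rw [← pow_succ', card_erase_add_one hv]
  exact this.false

theorem linearIndependent_of_apply_eq_zero {ι α K : Type*} [Fintype ι] [Field K]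
    (v : ι → α → K) (p : ι → α) (hdiag : ∀ j, v j (p j) ≠ 0)
    (hoff : ∀ i j, i ≠ j → v i (p j) = 0) : LinearIndependent K v := by
  refine Fintype.linearIndependent_iff.2 fun g hg j => ?_
  have hj := congrFun hg (p j)
  rw [Finset.sum_apply, sum_eq_single j fun i _ hij => by simp [hoff i j hij]] at hj
  · simpa [hdiag j] using hj
  · simp

theorem LinearIndependent.card_le_of_forall_mem_span_range {K M : Type*} [Field K]
    [AddCommGroup M] [Module K M] {m r : ℕ} {w : Fin m → M} (hw : LinearIndependent K w)
    (u : Fin r → M) (hspan : ∀ i, w i ∈ Submodule.span K (Set.range u)) : m ≤ r := by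
  have := FiniteDimensional.span_of_finite K (Set.finite_range u)
  calc m = Module.finrank K (Submodule.span K (Set.range w)) := by
        rw [finrank_span_eq_card hw, Fintype.card_fin]
    _ ≤ (Set.range u).finrank K :=
        Submodule.finrank_mono (Submodule.span_le.2 (Set.range_subset_iff.2 hspan))
    _ ≤ r := (finrank_range_le_card u).trans_eq (Fintype.card_fin r)

theorem sum_sq_inv_sqrt_card_smul_indicator {n : ℕ} {S : Finset (Fin n)} (hS : S.Nonempty) :
    ∑ i, ((√(#S : ℝ))⁻¹ • indicator S) i ^ 2 = 1 := by
  have hcard : (0 : ℝ) < #S := by exact_mod_cast hS.card_pos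
  simp only [Pi.smul_apply, smul_eq_mul, indicator, mul_pow, inv_pow,
    Real.sq_sqrt hcard.le, ← mul_sum]
  simp [sum_ite_mem, hcard.ne']

theorem tapply_sub {ι : Type*} [Fintype ι] [DecidableEq ι] {k : ℕ} [NeZero k]
    (S T : (Fin k → ι) → ℝ) (x : ι → ℝ) : tapply (S - T) x = tapply S x - tapply T x := by
  ext i
  simp only [tapply, Pi.sub_apply, ← sum_sub_distrib]
  refine sum_congr rfl fun g _ => ?_
  split_ifs <;> ring

theorem tapply_eq_sum_cons {ι : Type*} [Fintype ι] [DecidableEq ι] {k : ℕ}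
    (T : (Fin (k + 1) → ι) → ℝ) (x : ι → ℝ) (i : ι) :
    tapply T x i = ∑ t : Fin k → ι, T (Fin.cons i t) * ∏ j, x (t j) := by
  have hprod (t : Fin k → ι) :
      ∏ j ∈ univ.erase 0, x ((Fin.cons i t : Fin (k + 1) → ι) j) = ∏ j, x (t j) := by
    rw [← compl_singleton, ← Fin.image_succ_univ,
      prod_image fun a _ b _ h => Fin.succ_injective _ h]
    simp
  rw [tapply, ← (Fin.consEquiv fun _ => ι).sum_comp, Fintype.sum_prod_type, sum_eq_single i]
  · simp [Fin.consEquiv, hprod]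
  · intro a _ ha
    simp [Fin.consEquiv, ha]
  · simp

namespace UniformHypergraph

section Succ

variable {n k : ℕ} (G : UniformHypergraph n (k + 1))

theorem tapply_degTensor (x : Fin n → ℝ) (i : Fin n) :
    tapply G.degTensor x i = G.degree i * x i ^ k := by
  rw [tapply_eq_sum_cons, sum_eq_single fun _ => i]
  · have hconst : ∀ l, (Fin.cons i (fun _ => i) : Fin (k + 1) → Fin n) l = i :=
      Fin.cases rfl fun _ => rfl
    simp [degTensor, hconst]
  · intro t _ ht
    obtain ⟨j, hj⟩ := Function.ne_iff.1 ht
    have hnconst : ¬∀ l, (Fin.cons i t : Fin (k + 1) → Fin n) l = i :=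
      fun h => hj (by simpa using h j.succ)
    simp [degTensor, hnconst]
  · simp

theorem tapply_adjTensor (x : Fin n → ℝ) (i : Fin n) :
    tapply G.adjTensor x i = ∑ e ∈ G.edges with i ∈ e, ∏ v ∈ e.erase i, x v := by
  have hfiber : ∀ e ∈ {e ∈ G.edges | i ∈ e}, ∀ t : Fin k → Fin n,
      insert i (univ.image t) = e ↔ univ.image t = e.erase i := fun e he t => by
    rw [mem_filter] at he
    exact insert_eq_iff_eq_erase he.2
      ((card_image_le.trans_eq (card_fin k)).trans_lt (by simp [G.card_eq e he.1]))
  -- group the tuples `Fin.cons i t` by the edge they enumerate; each edge gets `k!` of them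
  calc tapply G.adjTensor x i
      = ∑ t with insert i (univ.image t) ∈ G.edges,
          ((k.factorial : ℝ)⁻¹ * ∏ j, x (t j)) := by
        simp only [tapply_eq_sum_cons, adjTensor, Fin.image_univ_cons, sum_filter]
        refine sum_congr rfl fun t _ => ?_
        split_ifs <;> simp
    _ = ∑ e ∈ G.edges with i ∈ e, ∑ t with univ.image t = e.erase i,
          ((k.factorial : ℝ)⁻¹ * ∏ j, x (t j)) := by
        rw [← sum_fiberwise_of_maps_to (g := fun t => insert i (univ.image t))
          (t := G.edges.filter (i ∈ ·)) (fun t ht => by simpa using ht)]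
        refine sum_congr rfl fun e he => sum_congr ?_ fun _ _ => rfl
        ext t
        simp only [mem_filter, mem_univ, true_and, ← hfiber e he t]
        exact ⟨fun h => h.2, fun h => ⟨h ▸ (mem_filter.1 he).1, h⟩⟩
    _ = ∑ e ∈ G.edges with i ∈ e, ∏ v ∈ e.erase i, x v := by
        refine sum_congr rfl fun e he => ?_
        obtain ⟨heG, hie⟩ := mem_filter.1 he
        have hcard : #(e.erase i) = k := by simp [card_erase_of_mem hie, G.card_eq e heG]
        have hprod : ∀ t ∈ univ.filter (fun t : Fin k → Fin n => univ.image t = e.erase i),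
            ∏ j, x (t j) = ∏ v ∈ e.erase i, x v := fun t ht => by
          have himage := (mem_filter.1 ht).2
          have hinj : Function.Injective t :=
            Function.injective_of_card_image_univ (by rw [himage, hcard, Fintype.card_fin])
          rw [← himage, prod_image fun a _ b _ hab => hinj hab]
        rw [sum_congr rfl fun t ht => by rw [hprod t ht], sum_const,
          card_filter_image_univ_eq (by simpa using hcard), Fintype.card_fin, nsmul_eq_mul]
        field_simp

end Succ

variable {n k : ℕ} [NeZero k] (G : UniformHypergraph n k)

theorem tapply_lapTensor (x : Fin n → ℝ) (i : Fin n) :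
    tapply G.lapTensor x i =
      G.degree i * x i ^ (k - 1) - ∑ e ∈ G.edges with i ∈ e, ∏ v ∈ e.erase i, x v := by
  obtain ⟨k, rfl⟩ := Nat.exists_eq_add_one_of_ne_zero (NeZero.ne k)
  rw [show G.lapTensor = G.degTensor - G.adjTensor from rfl, tapply_sub, Pi.sub_apply,
    tapply_degTensor, tapply_adjTensor, Nat.add_sub_cancel]

theorem tapply_lapTensor_eq_zero_of_forall_mem_edge {x : Fin n → ℝ}
    (hx : ∀ e ∈ G.edges, ∀ u ∈ e, ∀ v ∈ e, x u = x v) : tapply G.lapTensor x = 0 := by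
  ext i
  have hedge : ∀ e ∈ {e ∈ G.edges | i ∈ e}, ∏ v ∈ e.erase i, x v = x i ^ (k - 1) := by
    intro e he
    obtain ⟨heG, hie⟩ := mem_filter.1 he
    rw [prod_congr rfl fun v hv => hx e heG v (mem_of_mem_erase hv) i hie, prod_const,
      card_erase_of_mem hie, G.card_eq e heG]
  rw [tapply_lapTensor, sum_congr rfl hedge, sum_const, degree, nsmul_eq_mul, Pi.zero_apply,
    sub_self]

variable {G}

theorem apply_eq_of_adjRel_of_forall_adjRel_le {x : Fin n → ℝ} (hx : 0 ≤ x)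
    (hL : tapply G.lapTensor x = 0) {b c : Fin n} (hmax : ∀ v, G.adjRel b v → x v ≤ x b)
    (hbc : G.adjRel b c) : x c = x b := by
  have hsmall : ∀ e ∈ {e ∈ G.edges | b ∈ e}, ∏ v ∈ e.erase b, x v ≤ x b ^ (k - 1) := by
    intro e he
    obtain ⟨heG, hbe⟩ := mem_filter.1 he
    rw [← G.card_eq e heG, ← card_erase_of_mem hbe, ← prod_const]
    exact prod_le_prod (fun v _ => hx v)
      fun v hv => hmax v ⟨e, heG, hbe, mem_of_mem_erase hv⟩
  have hbalance : ∑ e ∈ G.edges with b ∈ e, ∏ v ∈ e.erase b, x v =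
      ∑ e ∈ G.edges with b ∈ e, x b ^ (k - 1) := by
    rw [sum_const, ← degree, nsmul_eq_mul, eq_comm, ← sub_eq_zero, ← G.tapply_lapTensor, hL,
      Pi.zero_apply]
  obtain ⟨e, heG, hbe, hce⟩ := hbc
  by_cases hcb : c = b
  · rw [hcb]
  have hprod : ∏ v ∈ e.erase b, x v = x b ^ #(e.erase b) := by
    rw [card_erase_of_mem hbe, G.card_eq e heG]
    exact (sum_eq_sum_iff_of_le hsmall).1 hbalance e (mem_filter.2 ⟨heG, hbe⟩)
  exact eq_of_forall_le_of_prod_eq_pow (fun v _ => hx v)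
    (fun v hv => hmax v ⟨e, heG, hbe, mem_of_mem_erase hv⟩) hprod (mem_erase.2 ⟨hcb, hce⟩)

end UniformHypergraph

namespace UniformHypergraph.IsComponents

variable {n k r : ℕ} {G : UniformHypergraph n k} {V : Fin r → Finset (Fin n)}

theorem mem_of_adjRel (hV : G.IsComponents V) {j : Fin r} {u v : Fin n} (hu : u ∈ V j)
    (huv : G.adjRel u v) : v ∈ V j :=
  (hV.2.2 j u hu v).2 (.single huv)

theorem indicator_eq_of_mem_edge (hV : G.IsComponents V) (j : Fin r) {e : Finset (Fin n)}
    (he : e ∈ G.edges) {u v : Fin n} (hu : u ∈ e) (hv : v ∈ e) :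
    indicator (V j) u = indicator (V j) v := by
  have hiff : u ∈ V j ↔ v ∈ V j :=
    ⟨fun h => hV.mem_of_adjRel h ⟨e, he, hu, hv⟩, fun h => hV.mem_of_adjRel h ⟨e, he, hv, hu⟩⟩
  simp only [indicator, hiff]

theorem apply_eq_of_mem [NeZero k] (hV : G.IsComponents V) {x : Fin n → ℝ} (hx : 0 ≤ x)
    (hL : tapply G.lapTensor x = 0) {j : Fin r} {u v : Fin n} (hu : u ∈ V j) (hv : v ∈ V j) :
    x u = x v := by
  obtain ⟨w, hw, hmax⟩ := exists_max_image (V j) x (hV.2.1 j)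
  have hreach : ∀ c, Relation.ReflTransGen G.adjRel w c → x c = x w := by
    intro c hc
    induction hc with
    | refl => rfl
    | tail hwb hbc ih =>
      have hb := (hV.2.2 j w hw _).2 hwb
      rw [apply_eq_of_adjRel_of_forall_adjRel_le hx hL
        (fun c hbc => ih ▸ hmax c (hV.mem_of_adjRel hb hbc)) hbc, ih]
  rw [hreach u ((hV.2.2 j w hw u).1 hu), hreach v ((hV.2.2 j w hw v).1 hv)]

theorem mem_span_indicator (hV : G.IsComponents V) {x : Fin n → ℝ}
    (hx : ∀ j, ∀ u ∈ V j, ∀ v ∈ V j, x u = x v) :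
    x ∈ Submodule.span ℝ (Set.range fun j => indicator (V j)) := by
  choose p hp using hV.2.1
  have hsum : x = ∑ j, x (p j) • indicator (V j) := by
    ext i
    obtain ⟨j, hij, huniq⟩ := hV.1 i
    rw [Finset.sum_apply, sum_eq_single j fun l _ hlj => ?_]
    · simp [indicator, hij, hx j _ (hp j) i hij]
    · simp
    · have hil : i ∉ V l := fun h => hlj (huniq l h)
      simp [indicator, hil]
  rw [hsum]
  exact Submodule.sum_mem _ fun j _ =>
    Submodule.smul_mem _ _ (Submodule.subset_span (Set.mem_range_self j))

end UniformHypergraph.IsComponents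

theorem components_eq_Z_geometry_connectivity_general {n k r : ℕ} [NeZero k]
    (G : UniformHypergraph n k) (V : Fin r → Finset (Fin n)) (hV : G.IsComponents V) :
    maxLinIndep {x : Fin n → ℝ | (∀ i, 0 ≤ x i) ∧ ∑ i, x i ^ 2 = 1 ∧
      tapply G.lapTensor x = 0} r := by
  refine ⟨?_, fun m w hw hlin => hlin.card_le_of_forall_mem_span_range _ fun i =>
    hV.mem_span_indicator fun j u hu v hv => hV.apply_eq_of_mem (hw i).1 (hw i).2.2 hu hv⟩
  choose p hp using hV.2.1
  have hsqrt : ∀ j, 0 < √(#(V j) : ℝ) := fun j => by simpa using (hV.2.1 j).card_pos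
  refine ⟨fun j => (√(#(V j) : ℝ))⁻¹ • indicator (V j), fun j => ⟨?_, ?_, ?_⟩, ?_⟩
  · intro i
    simp only [Pi.smul_apply, smul_eq_mul, indicator]
    split_ifs <;> positivity
  · exact sum_sq_inv_sqrt_card_smul_indicator (hV.2.1 j)
  · refine G.tapply_lapTensor_eq_zero_of_forall_mem_edge fun e he u hu v hv => ?_
    simp only [Pi.smul_apply, hV.indicator_eq_of_mem_edge j he hu hv]
  · refine linearIndependent_of_apply_eq_zero _ p
      (fun j => by simp [indicator, hp j, (hsqrt j).ne']) fun i j hij => ?_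
    have hpj : p j ∉ V i := fun h => hij ((hV.1 (p j)).unique h (hp j))
    simp [indicator, hpj]

/-- the number of connected components of `G` equals the Z-geometry
connectivity `β_Z(G)`. -/
theorem components_eq_Z_geometry_connectivity {n k r : ℕ} [NeZero k] (hk : 2 ≤ k)
    (G : UniformHypergraph n k) (V : Fin r → Finset (Fin n)) (hV : G.IsComponents V) :
    maxLinIndep {x : Fin n → ℝ | (∀ i, 0 ≤ x i) ∧ ∑ i, x i ^ 2 = 1 ∧
      tapply G.lapTensor x = 0} r :=
  components_eq_Z_geometry_connectivity_general G V hV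
end
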